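/- Suppose the linear operator P_T − P_T R_p P_T has operator norm (in Frobenius norm) at most 1/2, i.e., ‖(P_T − P_T R_p P_T)(X)‖_F ≤ (1/2)‖X‖_F for all X, where R_p(X) = Σ_{ij} (δ_{ij}/p_{ij}) X_{ij} e_i e_j^T with δ_{ij} ∈ {0,1} and 0 < p_{ij} ≤ 1. Then for every Z with R_p(Z) = 0, ‖P_T(Z)‖_F ≤ (max_{ij} √(2/p_{ij})) · ‖P_{T⊥}(Z)‖_F. -/

import Mathlib

open Matrix BigOperators

noncomputable def frob {m n : ℕ} (A : Matrix (Fin m) (Fin n) ℝ) : ℝ :=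
  Real.sqrt (∑ i, ∑ j, (A i j)^2)

noncomputable def spec {m n : ℕ} (A : Matrix (Fin m) (Fin n) ℝ) : ℝ :=
  ‖LinearMap.toContinuousLinearMap (Matrix.toEuclideanLin A)‖

noncomputable def nuclear {n : ℕ} (A : Matrix (Fin n) (Fin n) ℝ) : ℝ :=
  ∑ i, Real.sqrt ((show (Aᵀ * A).IsHermitian by
    simpa using Matrix.isHermitian_conjTranspose_mul_self A).eigenvalues i)

noncomputable def ip {n : ℕ} (A B : Matrix (Fin n) (Fin n) ℝ) : ℝ := (Aᵀ * B).trace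

noncomputable def PT {n r : ℕ} (U V : Matrix (Fin n) (Fin r) ℝ)
    (Z : Matrix (Fin n) (Fin n) ℝ) : Matrix (Fin n) (Fin n) ℝ :=
  U * Uᵀ * Z + Z * (V * Vᵀ) - U * Uᵀ * Z * (V * Vᵀ)

noncomputable def PTperp {n r : ℕ} (U V : Matrix (Fin n) (Fin r) ℝ)
    (Z : Matrix (Fin n) (Fin n) ℝ) : Matrix (Fin n) (Fin n) ℝ := Z - PT U V Z

noncomputable def rowTwo {m n : ℕ} (A : Matrix (Fin m) (Fin n) ℝ) : ℝ :=
  ⨆ i, Real.sqrt (∑ j, (A i j)^2)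

noncomputable def maxAbs {m n : ℕ} (A : Matrix (Fin m) (Fin n) ℝ) : ℝ :=
  ⨆ i, ⨆ j, |A i j|

/-!
Write `W = P_T Z`. Pairing `W` with `W - P_T R_p W` and using that `P_T` is a self-adjoint
projection fixing `W`, the contraction hypothesis gives `‖W‖² ≤ 2 ⟨W, R_p W⟩`. Since `R_p Z = 0`,
`Z` vanishes on the sampled entries, where therefore `W = -P_{T⊥} Z`; hence
`⟨W, R_p W⟩ = ∑_{δᵢⱼ = 1} (P_{T⊥} Z)ᵢⱼ² / pᵢⱼ ≤ max (1 / pᵢⱼ) ‖P_{T⊥} Z‖²`.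
-/

noncomputable def sampling {n : ℕ} (δ p : Fin n → Fin n → ℝ) (Z : Matrix (Fin n) (Fin n) ℝ) :
    Matrix (Fin n) (Fin n) ℝ :=
  Matrix.of fun i j => δ i j / p i j * Z i j

section Frobenius

variable {n : ℕ}

lemma ip_eq_sum_mul (A B : Matrix (Fin n) (Fin n) ℝ) :
    ip A B = ∑ i, ∑ j, A i j * B i j := by
  simp only [ip, Matrix.trace, Matrix.diag, Matrix.mul_apply, Matrix.transpose_apply]
  exact Finset.sum_comm

lemma frob_nonneg {m : ℕ} (A : Matrix (Fin m) (Fin n) ℝ) : 0 ≤ frob A := Real.sqrt_nonneg _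

lemma ip_self (A : Matrix (Fin n) (Fin n) ℝ) : ip A A = frob A ^ 2 := by
  rw [frob, Real.sq_sqrt (by positivity), ip_eq_sum_mul]
  simp only [sq]

lemma ip_le_frob_mul_frob (A B : Matrix (Fin n) (Fin n) ℝ) : ip A B ≤ frob A * frob B := by
  simpa [ip_eq_sum_mul, frob, Fintype.sum_prod_type] using
    Real.sum_mul_le_sqrt_mul_sqrt Finset.univ (fun q : Fin n × Fin n => A q.1 q.2)
      (fun q => B q.1 q.2)

lemma ip_sub_right (A B C : Matrix (Fin n) (Fin n) ℝ) : ip A (B - C) = ip A B - ip A C := by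
  simp only [ip, Matrix.mul_sub, Matrix.trace_sub]

end Frobenius

section TangentProjection

variable {n r : ℕ} (U V : Matrix (Fin n) (Fin r) ℝ)

lemma PT_PT (hU : Uᵀ * U = 1) (hV : Vᵀ * V = 1) (Z : Matrix (Fin n) (Fin n) ℝ) :
    PT U V (PT U V Z) = PT U V Z := by
  have hUU : ∀ X : Matrix (Fin r) (Fin n) ℝ, Uᵀ * (U * X) = X := fun X => by
    rw [← Matrix.mul_assoc, hU, Matrix.one_mul]
  have hVV : ∀ X : Matrix (Fin r) (Fin n) ℝ, Vᵀ * (V * X) = X := fun X => by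
    rw [← Matrix.mul_assoc, hV, Matrix.one_mul]
  simp only [PT, Matrix.mul_add, Matrix.add_mul, Matrix.mul_sub, Matrix.sub_mul,
    Matrix.mul_assoc, hUU, hVV]
  abel

lemma ip_PT_right (A B : Matrix (Fin n) (Fin n) ℝ) : ip A (PT U V B) = ip (PT U V A) B := by
  have cyc : ∀ X : Matrix (Fin n) (Fin n) ℝ, (V * (Vᵀ * X)).trace = (X * (V * Vᵀ)).trace :=
    fun X => by
      rw [Matrix.trace_mul_comm, Matrix.mul_assoc, Matrix.trace_mul_comm, Matrix.mul_assoc]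
  simp only [ip, PT, Matrix.transpose_sub, Matrix.transpose_add, Matrix.transpose_mul,
    Matrix.transpose_transpose, Matrix.mul_add, Matrix.mul_sub, Matrix.add_mul, Matrix.sub_mul,
    Matrix.trace_add, Matrix.trace_sub, Matrix.mul_assoc]
  rw [cyc, cyc]
  simp only [Matrix.mul_assoc]

end TangentProjection

lemma frob_sq_le_two_ip {n r : ℕ} {U V : Matrix (Fin n) (Fin r) ℝ}
    (R : Matrix (Fin n) (Fin n) ℝ → Matrix (Fin n) (Fin n) ℝ) {W : Matrix (Fin n) (Fin n) ℝ}
    (hW : PT U V W = W) (hcontr : frob (W - PT U V (R W)) ≤ 1 / 2 * frob W) :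
    frob W ^ 2 ≤ 2 * ip W (R W) := by
  have hpair : ip W (W - PT U V (R W)) = frob W ^ 2 - ip W (R W) := by
    rw [ip_sub_right, ip_self, ip_PT_right, hW]
  have := (ip_le_frob_mul_frob W _).trans
    (mul_le_mul_of_nonneg_left hcontr (frob_nonneg W))
  nlinarith

lemma ip_sampling_le_of_sampling_eq_zero {n : ℕ} {δ p : Fin n → Fin n → ℝ} {M : ℝ}
    (hM : ∀ i j, δ i j / p i j ≤ M) (hM0 : 0 ≤ M) {Z : Matrix (Fin n) (Fin n) ℝ}
    (hZ : sampling δ p Z = 0) (W : Matrix (Fin n) (Fin n) ℝ) :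
    ip W (sampling δ p W) ≤ M * frob (Z - W) ^ 2 := by
  rw [frob, Real.sq_sqrt (by positivity), ip_eq_sum_mul, Finset.mul_sum]
  refine Finset.sum_le_sum fun i _ => ?_
  rw [Finset.mul_sum]
  refine Finset.sum_le_sum fun j _ => ?_
  have hZij : δ i j / p i j * Z i j = 0 := congrFun (congrFun hZ i) j
  simp only [sampling, Matrix.of_apply, Matrix.sub_apply]
  rcases mul_eq_zero.1 hZij with hw | hz
  · rw [hw]
    nlinarith [sq_nonneg (Z i j - W i j)]
  · rw [hz]
    nlinarith [hM i j, sq_nonneg (W i j)]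

lemma le_sq_iSup_iSup_sqrt {ι κ : Type*} [Finite ι] [Finite κ] {f : ι → κ → ℝ}
    (hf : ∀ i j, 0 ≤ f i j) (i : ι) (j : κ) : f i j ≤ (⨆ i, ⨆ j, √(f i j)) ^ 2 := by
  have hle : √(f i j) ≤ ⨆ i, ⨆ j, √(f i j) :=
    (Finite.le_ciSup (fun j => √(f i j)) j).trans (Finite.le_ciSup (fun i => ⨆ j, √(f i j)) i)
  calc f i j = √(f i j) ^ 2 := (Real.sq_sqrt (hf i j)).symm
    _ ≤ _ := pow_le_pow_left₀ (Real.sqrt_nonneg _) hle 2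

theorem stmt11 (n r : ℕ) (U V : Matrix (Fin n) (Fin r) ℝ)
    (hU : Uᵀ * U = 1) (hV : Vᵀ * V = 1)
    (δ p : Fin n → Fin n → ℝ)
    (hδ : ∀ i j, δ i j = 0 ∨ δ i j = 1)
    (hp : ∀ i j, 0 < p i j ∧ p i j ≤ 1)
    (RP : Matrix (Fin n) (Fin n) ℝ → Matrix (Fin n) (Fin n) ℝ)
    (hRP : ∀ Z, RP Z = Matrix.of fun i j => δ i j / p i j * Z i j)
    (hcontr : ∀ X : Matrix (Fin n) (Fin n) ℝ,
        frob (PT U V X - PT U V (RP (PT U V X))) ≤ (1 / 2) * frob X)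
    (Z : Matrix (Fin n) (Fin n) ℝ) (hZ : RP Z = 0) :
    frob (PT U V Z) ≤ (⨆ i, ⨆ j, Real.sqrt (2 / p i j)) * frob (PTperp U V Z) := by
  obtain rfl : RP = sampling δ p := funext hRP
  set c := ⨆ i, ⨆ j, Real.sqrt (2 / p i j)
  have hc : 0 ≤ c := Real.iSup_nonneg fun i => Real.iSup_nonneg fun j => Real.sqrt_nonneg _
  have hM : ∀ i j, δ i j / p i j ≤ c ^ 2 / 2 := fun i j => by
    have hpij := (hp i j).1
    have h2p := le_sq_iSup_iSup_sqrt (fun i j => (div_pos two_pos (hp i j).1).le) i j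
    have hδ1 : δ i j ≤ 1 := (hδ i j).elim (fun h => h ▸ zero_le_one) le_of_eq
    rw [div_le_iff₀ hpij] at h2p ⊢
    linarith
  have hW := frob_sq_le_two_ip (sampling δ p) (PT_PT U V hU hV Z)
    (by simpa only [PT_PT U V hU hV] using hcontr (PT U V Z))
  have hsamp := ip_sampling_le_of_sampling_eq_zero hM (by positivity) hZ (PT U V Z)
  refine (pow_le_pow_iff_left₀ (frob_nonneg _) (mul_nonneg hc (frob_nonneg _)) two_ne_zero).1 ?_
  rw [mul_pow, PTperp]
  linarith
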